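/- (Monotonicity) Fix G in the class S and let H in S be a subgraph of G (i.e., V(H) ⊆ V(G) and E(H) ⊆ E(G)). Then for every vertex v of H, the expected number of pops at v under sink popping satisfies E[Q(H, v)] ≥ E[Q(G, v)]. -/

import Mathlib

open MeasureTheory ProbabilityTheory
open scoped ENNReal

namespace SinkPopping

variable {V E : Type} [Fintype V] [Fintype E] [DecidableEq V] [DecidableEq E]

/-- The orientations of the edge `e`: pairs `p = (tail, head)` whose unordered pair of
coordinates is the pair of endpoints of `e`.  The edge is oriented as pointing from
`p.1` (its tail) to `p.2` (its head).  A self-loop has exactly one orientation, any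
other edge has exactly two. -/
abbrev EdgeOrient (ends : E → Sym2 V) (e : E) : Type :=
  {p : V × V // ends e = s(p.1, p.2)}

/-- An orientation of the multigraph on vertices `V` with edges `E` whose endpoint map is
`ends` is a choice of orientation for each edge. -/
def Orientation (ends : E → Sym2 V) : Type :=
  ∀ e, EdgeOrient ends e

/-- A vertex is a sink (for the orientation `o`) if it is the tail of no edge. -/
def IsSink (ends : E → Sym2 V) (o : Orientation ends) (v : V) : Prop :=
  ∀ e, ((o e : V × V)).1 ≠ v

/-- A vertex is a source (for the orientation `o`) if it is the head of no edge. -/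
def IsSource (ends : E → Sym2 V) (o : Orientation ends) (v : V) : Prop :=
  ∀ e, ((o e : V × V)).2 ≠ v

/-- A sink-free orientation. -/
def IsSFO (ends : E → Sym2 V) (o : Orientation ends) : Prop :=
  ∀ v, ¬ IsSink ends o v

instance (ends : E → Sym2 V) (o : Orientation ends) (v : V) : Decidable (IsSink ends o v) :=
  inferInstanceAs (Decidable (∀ e, ((o e : V × V)).1 ≠ v))

instance (ends : E → Sym2 V) (o : Orientation ends) : Decidable (IsSFO ends o) :=
  inferInstanceAs (Decidable (∀ v, ¬ IsSink ends o v))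

/-- Two vertices are adjacent (neighbors) if some edge has them as its endpoints. -/
def Adj (ends : E → Sym2 V) (a b : V) : Prop :=
  ∃ e, ends e = s(a, b)

/-- There is at most one self-loop at each vertex (multiple self-loops play no role
in sink-free orientations). -/
def OneLoopPerVertex (ends : E → Sym2 V) : Prop :=
  ∀ e e' : E, (ends e).IsDiag → ends e = ends e' → e = e'

/-- `vs, es` form a cycle of length `n ≥ 1` in the multigraph: distinct vertices
`v_0, …, v_{n-1}`, distinct edges `e_0, …, e_{n-1}`, with `e_i` joining `v_i` to `v_{i+1}`
(indices mod `n`).  A `1`-cycle is a vertex with a self-loop, a `2`-cycle is a pair of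
parallel edges. -/
def IsCycleIn (ends : E → Sym2 V) (n : ℕ) (vs : ZMod n → V) (es : ZMod n → E) : Prop :=
  0 < n ∧ Function.Injective vs ∧ Function.Injective es ∧
    ∀ i, ends (es i) = s(vs i, vs (i + 1))

/-- Reachability: the reflexive-transitive closure of adjacency.  The connected component
of `v` is the set of vertices reachable from `v`. -/
def Reachable (ends : E → Sym2 V) : V → V → Prop :=
  Relation.ReflTransGen (Adj ends)

/-- The connected component of `v` contains a cycle; for a component (which is connected
by definition) this says exactly that the component is not a tree. -/
def ComponentHasCycle (ends : E → Sym2 V) (v : V) : Prop :=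
  ∃ (n : ℕ) (vs : ZMod n → V) (es : ZMod n → E),
    IsCycleIn ends n vs es ∧ ∀ i, Reachable ends v (vs i)

/-- The class `S` of graphs in which no connected component is a tree, i.e. every
connected component contains a cycle. -/
def InS (ends : E → Sym2 V) : Prop :=
  ∀ v : V, ComponentHasCycle ends v

/-- The class `S₀` of graphs in which every vertex lies in some cycle. -/
def InS₀ (ends : E → Sym2 V) : Prop :=
  ∀ v : V, ∃ (n : ℕ) (vs : ZMod n → V) (es : ZMod n → E),
    IsCycleIn ends n vs es ∧ ∃ i, vs i = v

/-- `G` is (isomorphic to) the `n`-cycle:  vertices `v_0, …, v_{n-1}` and for each `i` an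
edge joining `v_i` to `v_{i+1}` (indices mod `n`).  The `1`-cycle is a vertex with a
self-loop. -/
def IsCycleGraph (ends : E → Sym2 V) : Prop :=
  ∃ (n : ℕ) (_ : 0 < n) (fV : V ≃ ZMod n) (fE : E ≃ ZMod n),
    ∀ e, ends e = s(fV.symm (fE e), fV.symm (fE e + 1))

/-- `G` is (isomorphic to) the `n`-lollipop: a path `v_0, …, v_{n-1}` with the `n-1` edges
`v_i v_{i+1}`, together with a self-loop at the end `v_{n-1}`. -/
def IsLollipopGraph (ends : E → Sym2 V) : Prop :=
  ∃ (n : ℕ) (hn : 0 < n) (fV : V ≃ Fin n) (fE : E ≃ Fin n),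
    ∀ e, ends e = s(fV.symm (fE e),
      fV.symm (if h : ((fE e : ℕ) + 1) < n then ⟨(fE e : ℕ) + 1, h⟩ else fE e))

/-- A stack configuration: an infinite stack of orientations of each edge;
`ω e k` is the `k`-th orientation in the stack under the edge `e`. -/
def PopSpace (ends : E → Sym2 V) : Type :=
  ∀ e, ℕ → EdgeOrient ends e

/-- The orientation showing after the vertices in the list `l` have been popped (in order):
the stack of the edge `e` has been advanced once for every entry of `l` incident to `e`. -/
def orientAfter (ends : E → Sym2 V) (ω : PopSpace ends) (l : List V) : Orientation ends :=
  fun e => ω e (l.countP (fun v => decide (v ∈ ends e)))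

/-- `l` is a legal popping sequence for `ω`: each entry is a sink in the orientation
showing after the previous entries have been popped. -/
def IsLegal (ends : E → Sym2 V) (ω : PopSpace ends) (l : List V) : Prop :=
  ∀ (i : ℕ) (h : i < l.length),
    IsSink ends (orientAfter ends ω (l.take i)) (l.get ⟨i, h⟩)

/-- A finite maximal popping sequence: a legal popping sequence that cannot be extended
(equivalently, one that results in a sink-free orientation). -/
def IsMaximal (ends : E → Sym2 V) (ω : PopSpace ends) (l : List V) : Prop :=
  IsLegal ends ω l ∧ ∀ v, ¬ IsLegal ends ω (l ++ [v])

/-- An infinite legal popping sequence (such a sequence is automatically maximal). -/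
def IsLegalInf (ends : E → Sym2 V) (ω : PopSpace ends) (s : ℕ → V) : Prop :=
  ∀ i, IsSink ends (orientAfter ends ω ((List.range i).map s)) (s i)

/-- A choice rule: whenever there is a sink, `C` selects one. -/
def IsChoiceRule (ends : E → Sym2 V) (C : Orientation ends → V) : Prop :=
  ∀ o : Orientation ends, (∃ v, IsSink ends o v) → IsSink ends o (C o)

/-- Sink popping, run with the choice rule `C` on the stacks `ω`: `runPop ends C ω k` is the
list of vertices popped in the first `k` steps (popping stops once the current orientation
is sink-free). -/
def runPop (ends : E → Sym2 V) (C : Orientation ends → V) (ω : PopSpace ends) : ℕ → List V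
  | 0 => []
  | (k + 1) =>
      let l := runPop ends C ω k
      if IsSFO ends (orientAfter ends ω l) then l
      else l ++ [C (orientAfter ends ω l)]

/-- The number of pops made by sink popping before a sink-free orientation is reached
(`⊤` if popping goes on forever). -/
noncomputable def stopTime (ends : E → Sym2 V) (C : Orientation ends → V)
    (ω : PopSpace ends) : ℕ∞ :=
  sInf ((fun m : ℕ => (m : ℕ∞)) ''
    {m | IsSFO ends (orientAfter ends ω (runPop ends C ω m))})

/-- `Q(G, v)`: the number of times the vertex `v` is popped during sink popping. -/
noncomputable def popCount (ends : E → Sym2 V) (C : Orientation ends → V)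
    (ω : PopSpace ends) (v : V) : ℕ∞ :=
  ⨆ k, ((runPop ends C ω k).count v : ℕ∞)

/-- The initial orientation (the top of all the stacks). -/
def initOrient (ends : E → Sym2 V) (ω : PopSpace ends) : Orientation ends :=
  fun e => ω e 0

instance (ends : E → Sym2 V) (e : E) : Nonempty (EdgeOrient ends e) := by
  obtain ⟨a, b, h⟩ : ∃ a b, ends e = s(a, b) :=
    Sym2.ind (fun a b => ⟨a, b, rfl⟩) (ends e)
  exact ⟨⟨(a, b), h⟩⟩

instance (ends : E → Sym2 V) (e : E) : MeasurableSpace (EdgeOrient ends e) := ⊤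

instance (ends : E → Sym2 V) : MeasurableSpace (PopSpace ends) := by
  unfold PopSpace; infer_instance

/-- The stacks `{X_{e,k} = ω e k : e ∈ E, k ≥ 0}` are independent under `P`, and each
`X_{e,k}` is uniformly distributed over the orientations of the edge `e`. -/
def StacksIID (ends : E → Sym2 V) (P : Measure (PopSpace ends)) : Prop :=
  iIndepFun (fun (p : E × ℕ) (ω : PopSpace ends) => ω p.1 p.2) P
    ∧ ∀ (e : E) (k : ℕ),
        P.map (fun ω : PopSpace ends => ω e k)
          = (PMF.uniformOfFintype (EdgeOrient ends e)).toMeasure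

/-- The number of sink-free orientations of the graph. -/
noncomputable def NumSFO (ends : E → Sym2 V) : ℕ :=
  Nat.card {o : Orientation ends // IsSFO ends o}


/-- `u` is a leaf: a vertex of degree 1, i.e. `u` is incident to exactly one edge,
which is not a self-loop. -/
def IsLeaf (ends : E → Sym2 V) (u : V) : Prop :=
  (∃! e, u ∈ ends e) ∧ ∀ e, u ∈ ends e → ¬ (ends e).IsDiag

/-!
Couple the two processes: run sink popping on `G` with stacks `ω`, and give `H` the stacks of
its own edges read through the embedding. A vertex of `H` that is a sink in `G` is a sink in `H`,
so the pops of `G` at vertices of `H` form a legal popping sequence of `H`, and by the diamond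
lemma they are dominated by a maximal one wherever popping on `H` terminates.
The restricted stacks are again i.i.d. uniform, so they have the law of the stacks of `H`, and
popping on `H` terminates almost surely: since `H ∈ S` it has a sink-free orientation `σ`, and
once the next two entries of every stack show `σ` popping stops within `|V(H)|` steps; at each
stage this happens with a fixed positive probability, independently of the past.
-/

section Popping

variable {V E : Type} {ends : E → Sym2 V}

lemma EdgeOrient.fst_mem {e : E} (q : EdgeOrient ends e) : q.1.1 ∈ ends e :=
  (congrArg (q.1.1 ∈ ·) q.2).mpr (Sym2.mem_mk_left _ _)

lemma IsSink.of_forall_mem_eq {o o' : Orientation ends} {v : V} (hv : IsSink ends o v)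
    (h : ∀ e, v ∈ ends e → o e = o' e) : IsSink ends o' v := by
  intro e he
  rw [← h e (he ▸ (o' e).fst_mem)] at he
  exact hv e he

lemma IsSink.notMem_ends {o : Orientation ends} {u w : V} (hu : IsSink ends o u)
    (hw : IsSink ends o w) (huw : u ≠ w) {e : E} (he : u ∈ ends e) : w ∉ ends e := by
  intro hwe
  have hends : ends e = s(u, w) :=
    Sym2.eq_of_ne_mem huw he hwe (Sym2.mem_mk_left u w) (Sym2.mem_mk_right u w)
  rcases Sym2.mem_iff.mp (hends ▸ (o e).fst_mem : (o e).1.1 ∈ s(u, w)) with h | h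
  exacts [hu e h, hw e h]

variable [DecidableEq V]

variable (ends) in
def stackDepth (l : List V) (e : E) : ℕ :=
  l.countP (fun v => decide (v ∈ ends e))

variable (ends) in
lemma stackDepth_le_length (l : List V) (e : E) : stackDepth ends l e ≤ l.length :=
  List.countP_le_length

lemma stackDepth_append (l s : List V) (e : E) :
    stackDepth ends (l ++ s) e = stackDepth ends l e + stackDepth ends s e :=
  List.countP_append

variable (ends) in
lemma stackDepth_le_two_of_nodup {l : List V} (hl : l.Nodup) (e : E) :
    stackDepth ends l e ≤ 2 := by
  rw [stackDepth, List.countP_eq_length_filter, ← List.toFinset_card_of_nodup (hl.filter _)]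
  calc (l.filter (fun v => decide (v ∈ ends e))).toFinset.card
      ≤ (ends e).toFinset.card := Finset.card_le_card fun x hx => by simp_all
    _ ≤ 2 := by rw [Sym2.card_toFinset]; split_ifs <;> omega

variable (ends) in
def pop (ω : PopSpace ends) (w : V) : PopSpace ends :=
  fun e k => ω e (k + if w ∈ ends e then 1 else 0)

variable (ends) in
/-- Head-recursive form of `IsLegal`. -/
def IsPoppable : PopSpace ends → List V → Prop
  | _, [] => True
  | ω, w :: l => IsSink ends (initOrient ends ω) w ∧ IsPoppable (pop ends ω w) l

lemma orientAfter_cons (ω : PopSpace ends) (w : V) (l : List V) :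
    orientAfter ends ω (w :: l) = orientAfter ends (pop ends ω w) l := by
  funext e
  simp only [orientAfter, pop, List.countP_cons]
  by_cases h : w ∈ ends e <;> simp [h]

lemma orientAfter_perm (ω : PopSpace ends) {l l' : List V} (h : l.Perm l') :
    orientAfter ends ω l = orientAfter ends ω l' :=
  funext fun e => congrArg (ω e) (h.countP_eq _)

lemma pop_comm (ω : PopSpace ends) (u w : V) :
    pop ends (pop ends ω u) w = pop ends (pop ends ω w) u := by
  funext e k
  simp only [pop, Nat.add_right_comm]

lemma IsSink.initOrient_pop {ω : PopSpace ends} {u w : V}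
    (hu : IsSink ends (initOrient ends ω) u) (hw : IsSink ends (initOrient ends ω) w)
    (huw : u ≠ w) : IsSink ends (initOrient ends (pop ends ω w)) u :=
  hu.of_forall_mem_eq fun e he => by simp [initOrient, pop, hu.notMem_ends hw huw he]

lemma isSink_orientAfter_of_notMem {u : V} :
    ∀ {ω : PopSpace ends} {l : List V}, IsPoppable ends ω l →
      IsSink ends (initOrient ends ω) u → u ∉ l → IsSink ends (orientAfter ends ω l) u
  | _, [], _, hu, _ => hu
  | _, w :: l, ⟨hw, hl⟩, hu, hul => by
    rw [orientAfter_cons]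
    exact isSink_orientAfter_of_notMem hl (hu.initOrient_pop hw (List.ne_of_not_mem_cons hul))
      (List.not_mem_of_not_mem_cons hul)

/-- The exchange step of the diamond lemma: distinct sinks are not adjacent, so popping one
keeps the other a sink. -/
lemma isPoppable_pop_of_append_cons {u : V} :
    ∀ {ω : PopSpace ends} {l₁ : List V} (l₂ : List V), IsSink ends (initOrient ends ω) u →
      u ∉ l₁ → IsPoppable ends ω (l₁ ++ u :: l₂) → IsPoppable ends (pop ends ω u) (l₁ ++ l₂)
  | _, [], _, _, _, h => h.2
  | _, w :: l₁, l₂, hu, hul, ⟨hw, hl⟩ => by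
    have huw := List.ne_of_not_mem_cons hul
    refine ⟨hw.initOrient_pop hu huw.symm, ?_⟩
    rw [pop_comm]
    exact isPoppable_pop_of_append_cons l₂ (hu.initOrient_pop hw huw)
      (List.not_mem_of_not_mem_cons hul) hl

/-- The diamond lemma. The first pop `u` of `l` is a sink that stays one until it is popped, so
it occurs in `m`, and can be moved to the front of `m`. -/
lemma count_le_count_of_isSFO :
    ∀ {ω : PopSpace ends} {l m : List V}, IsPoppable ends ω l → IsPoppable ends ω m →
      IsSFO ends (orientAfter ends ω m) → ∀ v, l.count v ≤ m.count v
  | _, [], _, _, _, _, _ => by simp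
  | ω, u :: l, m, ⟨hu, hl⟩, hm, hsfo, v => by
    have hum : u ∈ m := by
      by_contra hnot
      exact hsfo u (isSink_orientAfter_of_notMem hm hu hnot)
    obtain ⟨m₁, m₂, hm₁, rfl, -⟩ := List.exists_erase_eq hum
    have hperm : (u :: (m₁ ++ m₂)).Perm (m₁ ++ u :: m₂) := List.perm_middle.symm
    have ih := count_le_count_of_isSFO hl (isPoppable_pop_of_append_cons m₂ hu hm₁ hm)
      (by rwa [← orientAfter_cons, orientAfter_perm ω hperm]) v
    rw [← hperm.count_eq, List.count_cons, List.count_cons]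
    omega

lemma isPoppable_append_singleton :
    ∀ {ω : PopSpace ends} {l : List V} {x : V},
      IsPoppable ends ω (l ++ [x]) ↔ IsPoppable ends ω l ∧ IsSink ends (orientAfter ends ω l) x
  | _, [], _ => by simp [IsPoppable]; rfl
  | ω, w :: l, x => by
    rw [List.cons_append, IsPoppable, IsPoppable, isPoppable_append_singleton,
      orientAfter_cons, and_assoc]

variable (ends) in
def NextTwoEq (σ : Orientation ends) (ω : PopSpace ends) (l : List V) : Prop :=
  ∀ e, ω e (stackDepth ends l e + 1) = σ e ∧ ω e (stackDepth ends l e + 2) = σ e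

/-- Every stack at `x` has advanced once or twice since `l` (at most twice, as `s` has no
repetitions), so `x` sees `σ`, in which it is no sink. -/
lemma not_isSink_of_nextTwoEq {σ : Orientation ends} (hσ : IsSFO ends σ) {ω : PopSpace ends}
    {l s : List V} (hw : NextTwoEq ends σ ω l) (hs : s.Nodup) {x : V} (hx : x ∈ s) :
    ¬ IsSink ends (orientAfter ends ω (l ++ s)) x := by
  intro hsink
  obtain ⟨e, he⟩ : ∃ e, (σ e).1.1 = x := by simpa [IsSink] using hσ x
  have hxe : x ∈ ends e := he ▸ (σ e).fst_mem
  have h1 : 0 < stackDepth ends s e := List.countP_pos_iff.mpr ⟨x, hx, by simpa using hxe⟩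
  have h2 := stackDepth_le_two_of_nodup ends hs e
  have horient : orientAfter ends ω (l ++ s) e = σ e := by
    change ω e (stackDepth ends (l ++ s) e) = σ e
    obtain h | h : stackDepth ends s e = 1 ∨ stackDepth ends s e = 2 := by omega
    · rw [stackDepth_append, h]; exact (hw e).1
    · rw [stackDepth_append, h]; exact (hw e).2
  exact hsink e (by rw [horient, he])

lemma nodup_of_isPoppable_append {σ : Orientation ends} (hσ : IsSFO ends σ)
    {ω : PopSpace ends} {l : List V} (hw : NextTwoEq ends σ ω l) :
    ∀ {s : List V}, IsPoppable ends ω (l ++ s) → s.Nodup := by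
  intro s
  induction s using List.reverseRecOn with
  | nil => simp
  | append_singleton s x ih =>
    intro h
    rw [← List.append_assoc, isPoppable_append_singleton] at h
    have hs := ih h.1
    refine List.nodup_append.mpr ⟨hs, List.nodup_singleton x, ?_⟩
    rintro y hy b hb rfl
    rw [List.mem_singleton] at hb
    exact not_isSink_of_nextTwoEq hσ hw hs hy (hb ▸ h.2)

end Popping

section Run

variable {V E : Type} [Fintype V] [Fintype E] [DecidableEq V] {ends : E → Sym2 V}
  {C : Orientation ends → V} {ω : PopSpace ends}

lemma runPop_succ_of_isSFO {k : ℕ} (h : IsSFO ends (orientAfter ends ω (runPop ends C ω k))) :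
    runPop ends C ω (k + 1) = runPop ends C ω k := by
  rw [runPop, if_pos h]

lemma runPop_succ_of_not_isSFO {k : ℕ}
    (h : ¬ IsSFO ends (orientAfter ends ω (runPop ends C ω k))) :
    runPop ends C ω (k + 1) =
      runPop ends C ω k ++ [C (orientAfter ends ω (runPop ends C ω k))] := by
  rw [runPop, if_neg h]

lemma runPop_add_of_isSFO {m : ℕ} (h : IsSFO ends (orientAfter ends ω (runPop ends C ω m))) :
    ∀ j, runPop ends C ω (m + j) = runPop ends C ω m
  | 0 => rfl
  | j + 1 => by
    have ih := runPop_add_of_isSFO h j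
    rw [← Nat.add_assoc, runPop_succ_of_isSFO (by rwa [ih]), ih]

lemma runPop_prefix {k k' : ℕ} (h : k ≤ k') : runPop ends C ω k <+: runPop ends C ω k' := by
  induction h with
  | refl => exact List.prefix_refl _
  | @step k' _ ih =>
    by_cases hs : IsSFO ends (orientAfter ends ω (runPop ends C ω k'))
    · rwa [runPop_succ_of_isSFO hs]
    · rw [runPop_succ_of_not_isSFO hs]
      exact ih.trans (List.prefix_append _ _)

lemma not_isSFO_of_le {m k : ℕ} (hmk : m ≤ k)
    (h : ¬ IsSFO ends (orientAfter ends ω (runPop ends C ω k))) :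
    ¬ IsSFO ends (orientAfter ends ω (runPop ends C ω m)) := by
  intro hs
  obtain ⟨j, rfl⟩ := Nat.exists_eq_add_of_le hmk
  rw [runPop_add_of_isSFO hs] at h
  exact h hs

variable (C ω) in
lemma length_runPop_le : ∀ k, (runPop ends C ω k).length ≤ k
  | 0 => le_rfl
  | k + 1 => by
    by_cases h : IsSFO ends (orientAfter ends ω (runPop ends C ω k))
    · rw [runPop_succ_of_isSFO h]
      exact (length_runPop_le k).trans k.le_succ
    · rw [runPop_succ_of_not_isSFO h, List.length_append, List.length_singleton]
      exact Nat.succ_le_succ (length_runPop_le k)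

lemma length_runPop {k : ℕ} (h : ¬ IsSFO ends (orientAfter ends ω (runPop ends C ω k))) :
    (runPop ends C ω k).length = k := by
  induction k with
  | zero => rfl
  | succ k ih =>
    have hk := not_isSFO_of_le k.le_succ h
    rw [runPop_succ_of_not_isSFO hk, List.length_append, ih hk, List.length_singleton]

lemma isPoppable_runPop (hC : IsChoiceRule ends C) (ω : PopSpace ends) :
    ∀ k, IsPoppable ends ω (runPop ends C ω k)
  | 0 => trivial
  | k + 1 => by
    by_cases h : IsSFO ends (orientAfter ends ω (runPop ends C ω k))
    · rw [runPop_succ_of_isSFO h]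
      exact isPoppable_runPop hC ω k
    · rw [runPop_succ_of_not_isSFO h]
      exact isPoppable_append_singleton.mpr
        ⟨isPoppable_runPop hC ω k, hC _ (by simpa [IsSFO] using h)⟩

lemma runPop_congr {ω' : PopSpace ends} {n : ℕ}
    (h : ∀ e j, j ≤ stackDepth ends (runPop ends C ω n) e → ω' e j = ω e j) :
    runPop ends C ω' n = runPop ends C ω n := by
  suffices ∀ k ≤ n, runPop ends C ω' k = runPop ends C ω k from this n le_rfl
  intro k hk
  induction k with
  | zero => rfl
  | succ k ih =>
    have hor : orientAfter ends ω' (runPop ends C ω k) = orientAfter ends ω (runPop ends C ω k) :=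
      funext fun e => h e _ ((runPop_prefix (by omega)).sublist.countP_le)
    rw [runPop, runPop, ih (by omega), hor]

/-- No vertex can be popped twice in the next `card V` steps, so popping must stop. -/
lemma isSFO_runPop_add_card (hC : IsChoiceRule ends C) {σ : Orientation ends}
    (hσ : IsSFO ends σ) {n : ℕ} (hw : NextTwoEq ends σ ω (runPop ends C ω n)) :
    IsSFO ends (orientAfter ends ω (runPop ends C ω (n + Fintype.card V))) := by
  by_contra h
  obtain ⟨s, hs⟩ := runPop_prefix (C := C) (ω := ω) (Nat.le_add_right n (Fintype.card V + 1))
  have hlen : (runPop ends C ω n ++ s).length = n + (Fintype.card V + 1) := by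
    rw [hs, ← Nat.add_assoc, runPop_succ_of_not_isSFO h, List.length_append, length_runPop h,
      List.length_singleton]
  rw [List.length_append, length_runPop (not_isSFO_of_le (Nat.le_add_right _ _) h)] at hlen
  have hnodup := nodup_of_isPoppable_append hσ hw (hs ▸ isPoppable_runPop hC ω _)
  have := hnodup.length_le_card
  omega

end Run


structure SubgraphEmbedding {V E V' E' : Type} (ends : E → Sym2 V) (ends' : E' → Sym2 V') where
  vert : V' → V
  edge : E' → E
  vert_injective : Function.Injective vert
  edge_injective : Function.Injective edge
  ends_edge : ∀ e, ends (edge e) = Sym2.map vert (ends' e)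

namespace SubgraphEmbedding

variable {V E V' E' : Type} {ends : E → Sym2 V} {ends' : E' → Sym2 V'}
  (φ : SubgraphEmbedding ends ends')

lemma vert_mem_ends_edge_iff {e' : E'} {u : V'} :
    φ.vert u ∈ ends (φ.edge e') ↔ u ∈ ends' e' := by
  rw [φ.ends_edge, Sym2.mem_map]
  exact ⟨fun ⟨_, hu, h⟩ => φ.vert_injective h ▸ hu, fun h => ⟨u, h, rfl⟩⟩

lemma notMem_ends_edge {w : V} (hw : w ∉ Set.range φ.vert) (e' : E') :
    w ∉ ends (φ.edge e') := by
  rw [φ.ends_edge, Sym2.mem_map]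
  exact fun ⟨u, _, hu⟩ => hw ⟨u, hu⟩

def pushOrient (e' : E') (q : EdgeOrient ends' e') : EdgeOrient ends (φ.edge e') :=
  ⟨(φ.vert q.1.1, φ.vert q.1.2),
    (φ.ends_edge e').trans ((congrArg (Sym2.map φ.vert) q.2).trans (Sym2.map_mk _ _ _))⟩

lemma pushOrient_bijective (e' : E') : Function.Bijective (φ.pushOrient e') := by
  refine ⟨fun q r h => ?_, fun q => ?_⟩
  · have h' := congrArg Subtype.val h
    simp only [pushOrient, Prod.mk.injEq] at h'
    exact Subtype.ext (Prod.ext (φ.vert_injective h'.1) (φ.vert_injective h'.2))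
  · obtain ⟨⟨x, y⟩, hxy⟩ := q
    have hx : x ∈ Sym2.map φ.vert (ends' e') := φ.ends_edge e' ▸ hxy ▸ Sym2.mem_mk_left x y
    have hy : y ∈ Sym2.map φ.vert (ends' e') := φ.ends_edge e' ▸ hxy ▸ Sym2.mem_mk_right x y
    obtain ⟨a, -, rfl⟩ := Sym2.mem_map.mp hx
    obtain ⟨b, -, rfl⟩ := Sym2.mem_map.mp hy
    refine ⟨⟨(a, b), Sym2.map.injective φ.vert_injective ?_⟩, rfl⟩
    rw [← φ.ends_edge, hxy, Sym2.map_mk]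

noncomputable def orientEquiv (e' : E') : EdgeOrient ends' e' ≃ EdgeOrient ends (φ.edge e') :=
  Equiv.ofBijective _ (φ.pushOrient_bijective e')

noncomputable def pullOrientation (o : Orientation ends) : Orientation ends' :=
  fun e' => (φ.orientEquiv e').symm (o (φ.edge e'))

noncomputable def pullStacks (ω : PopSpace ends) : PopSpace ends' :=
  fun e' k => (φ.orientEquiv e').symm (ω (φ.edge e') k)

lemma vert_fst_orientEquiv_symm {e' : E'} (q : EdgeOrient ends (φ.edge e')) :
    φ.vert ((φ.orientEquiv e').symm q).1.1 = q.1.1 :=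
  congrArg (fun r : EdgeOrient ends (φ.edge e') => r.1.1) ((φ.orientEquiv e').apply_symm_apply q)

lemma isSink_pullOrientation {o : Orientation ends} {u : V'} (h : IsSink ends o (φ.vert u)) :
    IsSink ends' (φ.pullOrientation o) u := fun e' he' =>
  h (φ.edge e') (by rw [← he', pullOrientation, φ.vert_fst_orientEquiv_symm])

noncomputable def restrictPops (l : List V) : List V' :=
  l.filterMap (Function.partialInv φ.vert)

lemma restrictPops_vert_cons (u : V') (l : List V) :
    φ.restrictPops (φ.vert u :: l) = u :: φ.restrictPops l := by
  simp [restrictPops, Function.partialInv_left φ.vert_injective]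

lemma restrictPops_cons_of_notMem_range {w : V} (hw : w ∉ Set.range φ.vert) (l : List V) :
    φ.restrictPops (w :: l) = φ.restrictPops l := by
  have : Function.partialInv φ.vert w = none := dif_neg hw
  simp [restrictPops, this]

lemma count_restrictPops [DecidableEq V] [DecidableEq V'] (u : V') :
    ∀ l : List V, (φ.restrictPops l).count u = l.count (φ.vert u)
  | [] => rfl
  | w :: l => by
    by_cases hw : w ∈ Set.range φ.vert
    · obtain ⟨u', rfl⟩ := hw
      rw [φ.restrictPops_vert_cons, List.count_cons, List.count_cons, count_restrictPops u l,
        φ.vert_injective.beq_eq]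
    · rw [φ.restrictPops_cons_of_notMem_range hw, List.count_cons, count_restrictPops u l]
      have : (w == φ.vert u) = false := beq_false_of_ne fun h => hw ⟨u, h.symm⟩
      simp [this]

lemma pullStacks_pop_vert [DecidableEq V] [DecidableEq V'] (ω : PopSpace ends) (u : V') :
    φ.pullStacks (pop ends ω (φ.vert u)) = pop ends' (φ.pullStacks ω) u := by
  funext e' k
  simp only [pullStacks, pop, φ.vert_mem_ends_edge_iff]

lemma pullStacks_pop_of_notMem_range [DecidableEq V] (ω : PopSpace ends) {w : V}
    (hw : w ∉ Set.range φ.vert) : φ.pullStacks (pop ends ω w) = φ.pullStacks ω := by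
  funext e' k
  simp only [pullStacks, pop, if_neg (φ.notMem_ends_edge hw e'), Nat.add_zero]

lemma isPoppable_restrictPops [DecidableEq V] [DecidableEq V'] :
    ∀ {ω : PopSpace ends} {l : List V}, IsPoppable ends ω l →
      IsPoppable ends' (φ.pullStacks ω) (φ.restrictPops l)
  | _, [], _ => trivial
  | ω, w :: l, ⟨hw, hl⟩ => by
    by_cases hr : w ∈ Set.range φ.vert
    · obtain ⟨u, rfl⟩ := hr
      rw [φ.restrictPops_vert_cons]
      exact ⟨φ.isSink_pullOrientation hw, φ.pullStacks_pop_vert ω u ▸ isPoppable_restrictPops hl⟩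
    · rw [φ.restrictPops_cons_of_notMem_range hr]
      exact φ.pullStacks_pop_of_notMem_range ω hr ▸ isPoppable_restrictPops hl

lemma popCount_le_popCount_pullStacks [Fintype V] [Fintype E] [Fintype V'] [Fintype E']
    [DecidableEq V] [DecidableEq V'] {C : Orientation ends → V} (hC : IsChoiceRule ends C)
    {C' : Orientation ends' → V'} (hC' : IsChoiceRule ends' C') {ω : PopSpace ends} {m : ℕ}
    (hm : IsSFO ends' (orientAfter ends' (φ.pullStacks ω) (runPop ends' C' (φ.pullStacks ω) m)))
    (v : V') : popCount ends C ω (φ.vert v) ≤ popCount ends' C' (φ.pullStacks ω) v :=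
  iSup_le fun k => by
    have h := count_le_count_of_isSFO (φ.isPoppable_restrictPops (isPoppable_runPop hC ω k))
      (isPoppable_runPop hC' _ m) hm v
    rw [φ.count_restrictPops] at h
    exact (Nat.cast_le.mpr h).trans (le_iSup (fun j => ((runPop ends' C' _ j).count v : ℕ∞)) m)

end SubgraphEmbedding

section SinkFree

variable {V E : Type} {ends : E → Sym2 V}

variable (ends) in
def OnCycle (v : V) : Prop :=
  ∃ (n : ℕ) (vs : ZMod n → V) (es : ZMod n → E), IsCycleIn ends n vs es ∧ ∃ i, vs i = v

variable (ends) in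
def ReachesCycleIn : ℕ → V → Prop
  | 0, v => OnCycle ends v
  | m + 1, v => ∃ e u, ends e = s(v, u) ∧ ReachesCycleIn m u

lemma exists_reachesCycleIn (hS : InS ends) (v : V) : ∃ m, ReachesCycleIn ends m v := by
  obtain ⟨n, vs, es, hcyc, hreach⟩ := hS v
  have h := hreach 0
  clear hreach
  induction h using Relation.ReflTransGen.head_induction_on with
  | refl => exact ⟨0, n, vs, es, hcyc, 0, rfl⟩
  | head hadj _ ih =>
    obtain ⟨m, hm⟩ := ih
    obtain ⟨e, he⟩ := hadj
    exact ⟨m + 1, e, _, he, hm⟩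

def EdgeOrient.swap {e : E} (q : EdgeOrient ends e) : EdgeOrient ends e :=
  ⟨(q.1.2, q.1.1), q.2.trans Sym2.eq_swap⟩

def EdgeOrient.downhill (f : V → ℕ) {e : E} (q : EdgeOrient ends e) : EdgeOrient ends e :=
  if f q.1.1 < f q.1.2 then q.swap else q

lemma EdgeOrient.downhill_head_le (f : V → ℕ) {e : E} (q : EdgeOrient ends e) :
    f (q.downhill f).1.2 ≤ f (q.downhill f).1.1 := by
  unfold EdgeOrient.downhill
  split_ifs with h
  · exact h.le
  · exact not_lt.mp h

/-- Orient every edge downhill for the distance to the cycles. -/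
lemma exists_orientation_isSink_onCycle (hS : InS ends) :
    ∃ o : Orientation ends, ∀ v, IsSink ends o v → OnCycle ends v := by
  classical
  let d : V → ℕ := fun v => Nat.find (exists_reachesCycleIn hS v)
  have hd : ∀ v, ReachesCycleIn ends (d v) v := fun v => Nat.find_spec (exists_reachesCycleIn hS v)
  have hmin : ∀ v m, ReachesCycleIn ends m v → d v ≤ m := fun v _ h => Nat.find_min' _ h
  let o : Orientation ends := fun e => (Classical.arbitrary (EdgeOrient ends e)).downhill d
  refine ⟨o, fun v hv => ?_⟩
  by_contra hnc
  have hreach := hd v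
  cases hdv : d v with
  | zero => rw [hdv] at hreach; exact hnc hreach
  | succ m =>
    rw [hdv] at hreach
    obtain ⟨e, u, he, hu⟩ := hreach
    have hdu : d u < d v := (hmin u m hu).trans_lt (hdv ▸ m.lt_succ_self)
    have hle : d (o e).1.2 ≤ d (o e).1.1 := EdgeOrient.downhill_head_le d _
    rcases Sym2.eq_iff.mp ((o e).2.symm.trans he) with ⟨h1, -⟩ | ⟨h1, h2⟩
    · exact hv e h1
    · rw [h1, h2] at hle
      omega

/-- Direct the cycle and leave the other edges alone. -/
lemma exists_orientation_reorient_cycle (o : Orientation ends) {n : ℕ} {vs : ZMod n → V}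
    {es : ZMod n → E} (hcyc : IsCycleIn ends n vs es) :
    ∃ o' : Orientation ends, (∀ w, IsSink ends o' w → IsSink ends o w) ∧
      ∀ i, ¬ IsSink ends o' (vs i) := by
  classical
  obtain ⟨-, -, hinj, hends⟩ := hcyc
  let o' : Orientation ends := fun e =>
    if h : ∃ j, es j = e then
      ⟨(vs h.choose, vs (h.choose + 1)), (congrArg ends h.choose_spec).symm.trans (hends _)⟩
    else o e
  have ho' : ∀ j, (o' (es j)).1 = (vs j, vs (j + 1)) := by
    intro j
    have h : ∃ j', es j' = es j := ⟨j, rfl⟩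
    simp only [o', dif_pos h, hinj h.choose_spec]
  refine ⟨o', fun w hw => ?_, fun i hi => hi (es i) (by rw [ho'])⟩
  rintro e rfl
  by_cases h : ∃ j, es j = e
  · obtain ⟨j, rfl⟩ := h
    rcases Sym2.mem_iff.mp (hends j ▸ (o (es j)).fst_mem :
      (o (es j)).1.1 ∈ s(vs j, vs (j + 1))) with h | h
    · exact hw (es j) (by rw [ho', h])
    · exact hw (es (j + 1)) (by rw [ho', h])
  · exact hw e (by simp only [o', dif_neg h])

lemma exists_isSFO [Fintype V] (hS : InS ends) : ∃ σ : Orientation ends, IsSFO ends σ := by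
  classical
  obtain ⟨o, ho⟩ := exists_orientation_isSink_onCycle hS
  induction hk : (Finset.univ.filter (IsSink ends o)).card using Nat.strong_induction_on
    generalizing o with
  | _ k ih =>
    by_cases hsfo : IsSFO ends o
    · exact ⟨o, hsfo⟩
    obtain ⟨v, hv⟩ : ∃ v, IsSink ends o v := by simpa [IsSFO] using hsfo
    obtain ⟨n, vs, es, hcyc, i, rfl⟩ := ho v hv
    obtain ⟨o', hsub, hcycle⟩ := exists_orientation_reorient_cycle o hcyc
    have hlt : (Finset.univ.filter (IsSink ends o')).card < k := by
      rw [← hk]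
      refine Finset.card_lt_card ⟨fun w => by simpa using hsub w, fun h => ?_⟩
      exact hcycle i (Finset.mem_filter.mp (h (Finset.mem_filter.mpr ⟨Finset.mem_univ _, hv⟩))).2
    exact ih _ hlt o' (fun w hw => ho w (hsub w hw)) rfl

end SinkFree


lemma iIndepFun_map_iff {Ω Ω' ι : Type*} [MeasurableSpace Ω] [MeasurableSpace Ω']
    {μ : Measure Ω} {Φ : Ω → Ω'} (hΦ : Measurable Φ) {β : ι → Type*}
    [∀ i, MeasurableSpace (β i)] {X : ∀ i, Ω' → β i} (hX : ∀ i, Measurable (X i)) :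
    iIndepFun X (μ.map Φ) ↔ iIndepFun (fun i => X i ∘ Φ) μ := by
  simp only [iIndepFun_iff_measure_inter_preimage_eq_mul]
  refine forall_congr' fun S => forall_congr' fun sets => forall_congr' fun hs => ?_
  rw [Measure.map_apply hΦ (Finset.measurableSet_biInter S fun i hi => hX i (hs i hi)),
    Set.preimage_iInter₂,
    Finset.prod_congr rfl fun i hi => Measure.map_apply hΦ (hX i (hs i hi))]
  rfl

lemma PMF.toMeasure_uniformOfFintype_map_equiv {α β : Type*} [Fintype α] [Nonempty α]
    [Fintype β] [Nonempty β] [MeasurableSpace α] [MeasurableSpace β] [DiscreteMeasurableSpace α]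
    [DiscreteMeasurableSpace β] (f : α ≃ β) :
    (PMF.uniformOfFintype α).toMeasure.map f = (PMF.uniformOfFintype β).toMeasure := by
  refine Measure.ext_of_singleton fun b => ?_
  have hb : f ⁻¹' {b} = {f.symm b} := Set.ext fun a => by simp [Equiv.eq_symm_apply]
  rw [Measure.map_apply Measurable.of_discrete .of_discrete, hb,
    PMF.toMeasure_apply_singleton _ _ .of_discrete, PMF.toMeasure_apply_singleton _ _ .of_discrete,
    PMF.uniformOfFintype_apply, PMF.uniformOfFintype_apply, Fintype.card_congr f]

section Stacks

variable {V E : Type} {ends : E → Sym2 V}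

def restrictStacks (S : Finset (E × ℕ)) (ω : PopSpace ends) : ∀ p : S, EdgeOrient ends p.1.1 :=
  fun p => ω p.1.1 p.1.2

def DependsOnStacks {β : Type*} (S : Finset (E × ℕ)) (f : PopSpace ends → β) : Prop :=
  ∀ ω ω', (∀ p ∈ S, ω p.1 p.2 = ω' p.1 p.2) → f ω = f ω'

lemma measurable_stack (e : E) (k : ℕ) : Measurable fun ω : PopSpace ends => ω e k :=
  (measurable_pi_apply k).comp (measurable_pi_apply e)

lemma measurable_restrictStacks (S : Finset (E × ℕ)) :
    Measurable (restrictStacks (ends := ends) S) :=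
  measurable_pi_lambda _ fun p => measurable_stack p.1.1 p.1.2

lemma DependsOnStacks.exists_eq_comp {β : Type*} {S : Finset (E × ℕ)} {f : PopSpace ends → β}
    (hf : DependsOnStacks S f) : ∃ g, f = g ∘ restrictStacks S := by
  classical
  let extend (x : ∀ p : S, EdgeOrient ends p.1.1) : PopSpace ends := fun e j =>
    if h : (e, j) ∈ S then x ⟨(e, j), h⟩ else Classical.arbitrary _
  exact ⟨f ∘ extend, funext fun ω => hf _ _ fun p hp => by simp [extend, hp, restrictStacks]⟩

lemma DependsOnStacks.exists_eq_preimage {S : Finset (E × ℕ)} {A : Set (PopSpace ends)}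
    (hA : DependsOnStacks S (· ∈ A)) : ∃ B, A = restrictStacks S ⁻¹' B := by
  obtain ⟨g, hg⟩ := hA.exists_eq_comp
  exact ⟨{x | g x}, Set.ext fun ω => iff_of_eq (congrFun hg ω)⟩

lemma DependsOnStacks.comp {β γ : Type*} {S : Finset (E × ℕ)} {f : PopSpace ends → β}
    (hf : DependsOnStacks S f) (g : β → γ) : DependsOnStacks S (g ∘ f) :=
  fun ω ω' h => congrArg g (hf ω ω' h)

lemma DependsOnStacks.measurable [Countable V] {β : Type*} [MeasurableSpace β]
    {S : Finset (E × ℕ)} {f : PopSpace ends → β} (hf : DependsOnStacks S f) : Measurable f := by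
  obtain ⟨g, rfl⟩ := hf.exists_eq_comp
  exact Measurable.of_discrete.comp (measurable_restrictStacks S)

lemma DependsOnStacks.measurableSet [Countable V] {S : Finset (E × ℕ)}
    {A : Set (PopSpace ends)} (hA : DependsOnStacks S (· ∈ A)) : MeasurableSet A :=
  measurableSet_setOfPred.mpr hA.measurable

variable [Fintype V] [DecidableEq V] {μ ν : Measure (PopSpace ends)}

lemma StacksIID.isProbabilityMeasure (hμ : StacksIID ends μ) : IsProbabilityMeasure μ := by
  constructor
  simpa using hμ.1.measure_inter_preimage_eq_mul ∅ (sets := fun _ => Set.univ)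
    (fun _ _ => MeasurableSet.univ)

lemma StacksIID.measure_eq_prod (hμ : StacksIID ends μ) (S : Finset (E × ℕ))
    (q : ∀ p : E × ℕ, EdgeOrient ends p.1) :
    μ {ω | ∀ p ∈ S, ω p.1 p.2 = q p} =
      ∏ p ∈ S, ((Fintype.card (EdgeOrient ends p.1) : ℝ≥0∞))⁻¹ := by
  have h := hμ.1.measure_inter_preimage_eq_mul S (sets := fun p => {q p})
    fun _ _ => .of_discrete
  convert h using 1
  · congr 1
    ext ω
    simp
  · refine Finset.prod_congr rfl fun p _ => ?_
    rw [← Measure.map_apply (measurable_stack _ _) .of_discrete, hμ.2,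
      PMF.toMeasure_apply_singleton _ _ .of_discrete, PMF.uniformOfFintype_apply]

lemma StacksIID.map_restrictStacks_eq (hμ : StacksIID ends μ) (hν : StacksIID ends ν)
    (S : Finset (E × ℕ)) : μ.map (restrictStacks S) = ν.map (restrictStacks S) := by
  classical
  refine Measure.ext_of_singleton fun x => ?_
  let q (p : E × ℕ) : EdgeOrient ends p.1 :=
    if h : p ∈ S then x ⟨p, h⟩ else Classical.arbitrary _
  have hx : restrictStacks S ⁻¹' {x} = {ω | ∀ p ∈ S, ω p.1 p.2 = q p} := by
    ext ω
    simp only [Set.mem_preimage, Set.mem_singleton_iff, funext_iff, Subtype.forall,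
      Set.mem_ofPred_eq, restrictStacks, q]
    exact forall₂_congr fun p hp => by rw [dif_pos hp]
  rw [Measure.map_apply (measurable_restrictStacks S) .of_discrete,
    Measure.map_apply (measurable_restrictStacks S) .of_discrete, hx, hμ.measure_eq_prod,
    hν.measure_eq_prod]

lemma DependsOnStacks.lintegral_eq (hμ : StacksIID ends μ) (hν : StacksIID ends ν)
    {S : Finset (E × ℕ)} {f : PopSpace ends → ℝ≥0∞} (hf : DependsOnStacks S f) :
    ∫⁻ ω, f ω ∂μ = ∫⁻ ω, f ω ∂ν := by
  obtain ⟨g, rfl⟩ := hf.exists_eq_comp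
  rw [Function.comp_def, ← lintegral_map .of_discrete (measurable_restrictStacks S),
    ← lintegral_map .of_discrete (measurable_restrictStacks S), hμ.map_restrictStacks_eq hν]

lemma StacksIID.measure_inter_eq_mul (hμ : StacksIID ends μ) {S T : Finset (E × ℕ)}
    (hST : Disjoint S T) {A B : Set (PopSpace ends)} (hA : DependsOnStacks S (· ∈ A))
    (hB : DependsOnStacks T (· ∈ B)) : μ (A ∩ B) = μ A * μ B := by
  obtain ⟨A', rfl⟩ := hA.exists_eq_preimage
  obtain ⟨B', rfl⟩ := hB.exists_eq_preimage
  exact (hμ.1.indepFun_finset S T hST fun p => measurable_stack p.1 p.2)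
    |>.measure_inter_preimage_eq_mul _ _ .of_discrete .of_discrete

end Stacks

namespace SubgraphEmbedding

variable {V E V' E' : Type} {ends : E → Sym2 V} {ends' : E' → Sym2 V'}
  (φ : SubgraphEmbedding ends ends')

lemma measurable_pullStacks : Measurable φ.pullStacks :=
  measurable_pi_lambda _ fun e' => measurable_pi_lambda _ fun k =>
    Measurable.of_discrete.comp (measurable_stack (φ.edge e') k)

lemma stacksIID_map_pullStacks [Fintype V] [DecidableEq V] [Fintype V'] [DecidableEq V']
    {μ : Measure (PopSpace ends)} (hμ : StacksIID ends μ) :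
    StacksIID ends' (μ.map φ.pullStacks) := by
  constructor
  · rw [iIndepFun_map_iff φ.measurable_pullStacks fun p => measurable_stack p.1 p.2]
    have hinj : Function.Injective fun p : E' × ℕ => (φ.edge p.1, p.2) :=
      fun p q h => Prod.ext (φ.edge_injective (Prod.ext_iff.mp h).1) (Prod.ext_iff.mp h).2
    exact (hμ.1.precomp hinj).comp (fun p => (φ.orientEquiv p.1).symm)
      fun _ => Measurable.of_discrete
  · intro e' k
    rw [Measure.map_map (measurable_stack e' k) φ.measurable_pullStacks]
    change μ.map ((φ.orientEquiv e').symm ∘ fun ω => ω (φ.edge e') k) = _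
    rw [← Measure.map_map .of_discrete (measurable_stack _ k), hμ.2,
      PMF.toMeasure_uniformOfFintype_map_equiv]

end SubgraphEmbedding

section Expectation

variable {V E : Type} [Fintype V] [Fintype E] [DecidableEq V] {ends : E → Sym2 V}
  (C : Orientation ends → V)

lemma dependsOnStacks_runPop (n : ℕ) :
    DependsOnStacks (Finset.univ ×ˢ Finset.range (n + 1)) (fun ω => runPop ends C ω n) :=
  fun ω ω' h => (runPop_congr (ω := ω) (ω' := ω') fun e j hj => (h (e, j) (by
    have := (stackDepth_le_length ends _ e).trans (length_runPop_le C ω n)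
    simp only [Finset.mem_product, Finset.mem_univ, Finset.mem_range, true_and]
    omega)).symm).symm

lemma popCount_toENNReal (ω : PopSpace ends) (v : V) :
    (popCount ends C ω v : ℝ≥0∞) = ⨆ k, ((runPop ends C ω k).count v : ℝ≥0∞) := by
  simp [popCount]

lemma dependsOnStacks_count_runPop (v : V) (k : ℕ) :
    DependsOnStacks (Finset.univ ×ˢ Finset.range (k + 1))
      fun ω => ((runPop ends C ω k).count v : ℝ≥0∞) :=
  (dependsOnStacks_runPop C k).comp fun l => (l.count v : ℝ≥0∞)

lemma measurable_popCount (v : V) : Measurable fun ω => (popCount ends C ω v : ℝ≥0∞) := by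
  simp only [popCount_toENNReal]
  exact .iSup fun k => (dependsOnStacks_count_runPop C v k).measurable

lemma lintegral_popCount_eq {μ ν : Measure (PopSpace ends)} (hμ : StacksIID ends μ)
    (hν : StacksIID ends ν) (v : V) :
    ∫⁻ ω, (popCount ends C ω v : ℝ≥0∞) ∂μ = ∫⁻ ω, (popCount ends C ω v : ℝ≥0∞) ∂ν := by
  have hF := dependsOnStacks_count_runPop C v
  have hmono : Monotone fun k ω => ((runPop ends C ω k).count v : ℝ≥0∞) :=
    fun k k' hk ω => Nat.cast_le.mpr ((runPop_prefix hk).sublist.count_le v)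
  simp only [popCount_toENNReal]
  rw [lintegral_iSup (fun k => (hF k).measurable) hmono,
    lintegral_iSup (fun k => (hF k).measurable) hmono]
  exact iSup_congr fun k => (hF k).lintegral_eq hμ hν

end Expectation

section Termination

variable {V E : Type} [Fintype E] [DecidableEq V] {ends : E → Sym2 V}

variable (ends) in
def stacksUpTo (l : List V) : Finset (E × ℕ) :=
  (Finset.univ ×ˢ Finset.range (l.length + 1)).filter fun p => p.2 ≤ stackDepth ends l p.1

lemma mem_stacksUpTo {l : List V} {p : E × ℕ} :
    p ∈ stacksUpTo ends l ↔ p.2 ≤ stackDepth ends l p.1 := by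
  have := stackDepth_le_length ends l p.1
  simp only [stacksUpTo, Finset.mem_filter, Finset.mem_product, Finset.mem_univ,
    Finset.mem_range, true_and]
  omega

variable (ends) in
def windowStacks [DecidableEq E] (l : List V) : Finset (E × ℕ) :=
  (Finset.univ ×ˢ {1, 2}).image fun p => (p.1, stackDepth ends l p.1 + p.2)

lemma disjoint_stacksUpTo_windowStacks [DecidableEq E] (l : List V) :
    Disjoint (stacksUpTo ends l) (windowStacks ends l) := by
  refine Finset.disjoint_left.mpr fun p hp hw => ?_
  obtain ⟨⟨e, i⟩, hi, rfl⟩ := Finset.mem_image.mp hw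
  have := mem_stacksUpTo.mp hp
  simp only [Finset.mem_product, Finset.mem_insert, Finset.mem_singleton] at hi this
  omega

lemma nextTwoEq_iff [DecidableEq E] {σ : Orientation ends} {ω : PopSpace ends} {l : List V} :
    NextTwoEq ends σ ω l ↔ ∀ p ∈ windowStacks ends l, ω p.1 p.2 = σ p.1 := by
  simp only [NextTwoEq, windowStacks, Finset.forall_mem_image, Finset.mem_product,
    Finset.mem_univ, true_and, Finset.mem_insert, Finset.mem_singleton]
  exact ⟨fun h ⟨e, i⟩ hi => by rcases hi with rfl | rfl; exacts [(h e).1, (h e).2],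
    fun h e => ⟨@h (e, 1) (Or.inl rfl), @h (e, 2) (Or.inr rfl)⟩⟩

lemma dependsOnStacks_nextTwoEq [DecidableEq E] (σ : Orientation ends) (l : List V) :
    DependsOnStacks (windowStacks ends l) (· ∈ {ω | NextTwoEq ends σ ω l}) := fun ω ω' h => by
  simp only [Set.mem_ofPred_eq, nextTwoEq_iff]
  exact propext (forall₂_congr fun p hp => by rw [h p hp])

variable [Fintype V] {C : Orientation ends → V} {μ : Measure (PopSpace ends)}

variable (ends) in
noncomputable def windowProb : ℝ≥0∞ :=
  ∏ e, ((Fintype.card (EdgeOrient ends e) : ℝ≥0∞))⁻¹ ^ 2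

lemma windowProb_ne_zero : windowProb ends ≠ 0 :=
  Finset.prod_ne_zero_iff.mpr fun _ _ =>
    pow_ne_zero _ (ENNReal.inv_ne_zero.mpr (ENNReal.natCast_ne_top _))

lemma StacksIID.measure_nextTwoEq (hμ : StacksIID ends μ) (σ : Orientation ends) (l : List V) :
    μ {ω | NextTwoEq ends σ ω l} = windowProb ends := by
  classical
  simp only [nextTwoEq_iff]
  rw [hμ.measure_eq_prod _ fun p => σ p.1, windowStacks, Finset.prod_image, Finset.prod_product]
  · simp [windowProb, sq]
  · intro p _ q _ h
    simp only [Prod.mk.injEq] at h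
    exact Prod.ext h.1 (by rw [h.1] at h; omega)

variable (ends C) in
def unfinished (n : ℕ) : Set (PopSpace ends) :=
  {ω | ¬ IsSFO ends (orientAfter ends ω (runPop ends C ω n))}

variable (ends C) in
def runsThrough (n : ℕ) (l : List V) : Set (PopSpace ends) :=
  {ω | runPop ends C ω n = l ∧ ¬ IsSFO ends (orientAfter ends ω l)}

lemma dependsOnStacks_runsThrough (n : ℕ) (l : List V) :
    DependsOnStacks (stacksUpTo ends l) (· ∈ runsThrough ends C n l) := by
  suffices h : ∀ ω ω' : PopSpace ends, (∀ p ∈ stacksUpTo ends l, ω p.1 p.2 = ω' p.1 p.2) →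
      ω ∈ runsThrough ends C n l → ω' ∈ runsThrough ends C n l from
    fun ω ω' hω => propext ⟨h ω ω' hω, h ω' ω fun p hp => (hω p hp).symm⟩
  rintro ω ω' hω ⟨hrun, hsfo⟩
  have hagree : ∀ e j, j ≤ stackDepth ends l e → ω' e j = ω e j :=
    fun e j hj => (hω (e, j) (mem_stacksUpTo.mpr hj)).symm
  have horient : orientAfter ends ω' l = orientAfter ends ω l :=
    funext fun e => hagree e _ le_rfl
  exact ⟨(runPop_congr (hrun ▸ hagree)).trans hrun, horient ▸ hsfo⟩

/-- Given the first `n` pops, the next two entries of the stacks are still fresh and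
independent of them, and they end popping within `card V` steps with probability
`windowProb`. -/
lemma measure_unfinished_add_card_le (hC : IsChoiceRule ends C) {σ : Orientation ends}
    (hσ : IsSFO ends σ) (hμ : StacksIID ends μ) (n : ℕ) :
    μ (unfinished ends C (n + Fintype.card V)) ≤
      (1 - windowProb ends) * μ (unfinished ends C n) := by
  classical
  have := hμ.isProbabilityMeasure
  have hcover : unfinished ends C (n + Fintype.card V) ⊆
      ⋃ l, runsThrough ends C n l \ {ω | NextTwoEq ends σ ω l} := fun ω hω =>
    Set.mem_iUnion.mpr ⟨runPop ends C ω n, ⟨rfl, not_isSFO_of_le (Nat.le_add_right _ _) hω⟩,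
      fun hw => hω (isSFO_runPop_add_card hC hσ hw)⟩
  have hunion : unfinished ends C n = ⋃ l, runsThrough ends C n l := by
    ext ω
    simp [unfinished, runsThrough]
  have hW (l : List V) := dependsOnStacks_nextTwoEq σ l
  calc μ (unfinished ends C (n + Fintype.card V))
      ≤ ∑' l, μ (runsThrough ends C n l \ {ω | NextTwoEq ends σ ω l}) :=
        (measure_mono hcover).trans (measure_iUnion_le _)
    _ = ∑' l, (1 - windowProb ends) * μ (runsThrough ends C n l) := tsum_congr fun l => by
        have hR := dependsOnStacks_runsThrough (C := C) n l
        rw [← Set.sdiff_self_inter, measure_sdiff Set.inter_subset_left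
          (hR.measurableSet.inter (hW l).measurableSet).nullMeasurableSet (measure_ne_top _ _),
          hμ.measure_inter_eq_mul (disjoint_stacksUpTo_windowStacks l) hR (hW l),
          hμ.measure_nextTwoEq, ENNReal.sub_mul fun _ _ => measure_ne_top _ _, one_mul, mul_comm]
    _ = (1 - windowProb ends) * μ (unfinished ends C n) := by
        rw [ENNReal.tsum_mul_left, hunion, measure_iUnion _ fun l =>
          (dependsOnStacks_runsThrough n l).measurableSet]
        exact fun l l' hll' => Set.disjoint_left.mpr fun ω h h' => hll' (h.1.symm.trans h'.1)

lemma measure_unfinished_card_mul_le (hC : IsChoiceRule ends C) {σ : Orientation ends}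
    (hσ : IsSFO ends σ) (hμ : StacksIID ends μ) (k : ℕ) :
    μ (unfinished ends C (Fintype.card V * k)) ≤ (1 - windowProb ends) ^ k := by
  have := hμ.isProbabilityMeasure
  induction k with
  | zero => simpa using prob_le_one
  | succ k ih =>
    rw [Nat.mul_succ, pow_succ']
    exact (measure_unfinished_add_card_le hC hσ hμ _).trans (by gcongr)

lemma ae_exists_isSFO_runPop (hS : InS ends) (hC : IsChoiceRule ends C)
    (hμ : StacksIID ends μ) :
    ∀ᵐ ω ∂μ, ∃ m, IsSFO ends (orientAfter ends ω (runPop ends C ω m)) := by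
  obtain ⟨σ, hσ⟩ := exists_isSFO hS
  have hlt : 1 - windowProb ends < 1 :=
    ENNReal.sub_lt_self ENNReal.one_ne_top one_ne_zero windowProb_ne_zero
  rw [ae_iff]
  refine measure_mono_null (t := ⋂ k, unfinished ends C (Fintype.card V * k))
    (fun ω hω => Set.mem_iInter.mpr fun k => not_exists.mp hω _) ?_
  exact le_antisymm (ge_of_tendsto' (ENNReal.tendsto_pow_atTop_nhds_zero_of_lt_one hlt) fun k =>
    (measure_mono (Set.iInter_subset _ k)).trans (measure_unfinished_card_mul_le hC hσ hμ k))
    bot_le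

end Termination

theorem monotonicity_general
    {V' E' : Type} [Fintype V'] [Fintype E'] [DecidableEq V']
    (ends : E → Sym2 V) (ends' : E' → Sym2 V')
    (ιV : V' → V) (ιE : E' → E)
    (hιV : Function.Injective ιV) (hιE : Function.Injective ιE)
    (hends : ∀ e, ends (ιE e) = Sym2.map ιV (ends' e))
    (hS' : InS ends')
    (P : Measure (PopSpace ends)) (hP : StacksIID ends P)
    (P' : Measure (PopSpace ends')) (hP' : StacksIID ends' P')
    (C : Orientation ends → V) (hC : IsChoiceRule ends C)
    (C' : Orientation ends' → V') (hC' : IsChoiceRule ends' C')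
    (v : V') :
    ∫⁻ ω, (popCount ends C ω (ιV v) : ℝ≥0∞) ∂P
      ≤ ∫⁻ ω, (popCount ends' C' ω v : ℝ≥0∞) ∂P' := by
  let φ : SubgraphEmbedding ends ends' := ⟨ιV, ιE, hιV, hιE, hends⟩
  have hPφ := φ.stacksIID_map_pullStacks hP
  have hterm := ae_of_ae_map φ.measurable_pullStacks.aemeasurable
    (ae_exists_isSFO_runPop hS' hC' hPφ)
  calc ∫⁻ ω, (popCount ends C ω (ιV v) : ℝ≥0∞) ∂P
      ≤ ∫⁻ ω, (popCount ends' C' (φ.pullStacks ω) v : ℝ≥0∞) ∂P :=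
        lintegral_mono_ae <| hterm.mono fun ω ⟨_, hm⟩ =>
          ENat.toENNReal_le.mpr (φ.popCount_le_popCount_pullStacks hC hC' hm v)
    _ = ∫⁻ ω, (popCount ends' C' ω v : ℝ≥0∞) ∂(P.map φ.pullStacks) :=
        (lintegral_map (measurable_popCount C' v) φ.measurable_pullStacks).symm
    _ = ∫⁻ ω, (popCount ends' C' ω v : ℝ≥0∞) ∂P' := lintegral_popCount_eq C' hPφ hP' v

/-- Monotonicity.  If `H ∈ S` is a subgraph of `G ∈ S` (given by
injections of the vertex and edge sets which respect endpoints), then for every vertex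
`v` of `H`, `E Q(H, v) ≥ E Q(G, v)` (expectations for sink popping with i.i.d. uniform
stacks, with arbitrary choice rules, on the respective graphs). -/
theorem monotonicity
    {V' E' : Type} [Fintype V'] [Fintype E'] [DecidableEq V'] [DecidableEq E']
    (ends : E → Sym2 V) (ends' : E' → Sym2 V')
    (hloop : OneLoopPerVertex ends) (hloop' : OneLoopPerVertex ends')
    (ιV : V' → V) (ιE : E' → E)
    (hιV : Function.Injective ιV) (hιE : Function.Injective ιE)
    (hends : ∀ e, ends (ιE e) = Sym2.map ιV (ends' e))
    (hS : InS ends) (hS' : InS ends')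
    (P : Measure (PopSpace ends)) [IsProbabilityMeasure P] (hP : StacksIID ends P)
    (P' : Measure (PopSpace ends')) [IsProbabilityMeasure P'] (hP' : StacksIID ends' P')
    (C : Orientation ends → V) (hC : IsChoiceRule ends C)
    (C' : Orientation ends' → V') (hC' : IsChoiceRule ends' C')
    (v : V') :
    ∫⁻ ω, (popCount ends C ω (ιV v) : ℝ≥0∞) ∂P
      ≤ ∫⁻ ω, (popCount ends' C' ω v : ℝ≥0∞) ∂P' :=
  monotonicity_general ends ends' ιV ιE hιV hιE hends hS' P hP P' hP' C hC C' hC' v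

end SinkPopping
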